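/- Let P be the group with presentation ⟨a, e, f | e² = 1, f² = 1, a e a⁻¹ = f, a f a⁻¹ = e⟩. Then the subgroup of P generated by the two elements ae and ea is isomorphic to ℤ × ℤ (free abelian of rank 2) and has index 2 in P. -/

import Mathlib

/-!
Since `a²` commutes with `e`, the elements `x = a e` and `y = e a` commute (`x y = a² = y x`), and
conjugation by `a` and by `e` swaps them; as `f = a e a⁻¹`, the subgroup `H = ⟨x, y⟩` is normal.
Modulo `H` every generator is congruent to `a`, and `a² = x y ∈ H`, so `P ⧸ H` is generated by an
element of order at most 2.

In the action of `P` on `ℤ²` with `a (m, n) = (n + 1, m)` and `e (m, n) = (n, m)`, `x` and `y` act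
as the two unit translations while `a` is not a translation; so `(i, j) ↦ xⁱ yʲ` is injective and
`a ∉ H`.
-/

/-- Relators of the presentation `⟨a, e, f | e² = 1, f² = 1, a e a⁻¹ = f, a f a⁻¹ = e⟩`,
where the generators are `a = of 0`, `e = of 1`, `f = of 2`. -/
def stmt9Rels : Set (FreeGroup (Fin 3)) :=
  {FreeGroup.of 1 * FreeGroup.of 1,
   FreeGroup.of 2 * FreeGroup.of 2,
   FreeGroup.of 0 * FreeGroup.of 1 * (FreeGroup.of 0)⁻¹ * (FreeGroup.of 2)⁻¹,
   FreeGroup.of 0 * FreeGroup.of 2 * (FreeGroup.of 0)⁻¹ * (FreeGroup.of 1)⁻¹}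

open Subgroup

namespace Subgroup

theorem index_eq_two_of_closure_eq_top {G : Type*} [Group G] {H : Subgroup G} [H.Normal]
    {S : Set G} (hS : closure S = ⊤) {t : G} (ht : t ∉ H) (ht2 : t * t ∈ H)
    (hSt : ∀ s ∈ S, s⁻¹ * t ∈ H) : H.index = 2 := by
  set q := QuotientGroup.mk' H
  have himage : q '' S ⊆ {q t} := by
    rintro _ ⟨s, hs, rfl⟩
    exact QuotientGroup.eq.mpr (hSt s hs)
  have htop : zpowers (q t) = ⊤ := by
    rw [eq_top_iff, ← MonoidHom.range_eq_top.mpr (QuotientGroup.mk'_surjective H),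
      MonoidHom.range_eq_map, ← hS, MonoidHom.map_closure, zpowers_eq_closure]
    exact closure_mono himage
  have hord : orderOf (q t) = 2 := orderOf_eq_prime
    (by rw [sq, ← map_mul]; exact (QuotientGroup.eq_one_iff _).mpr ht2)
    (fun h ↦ ht ((QuotientGroup.eq_one_iff _).mp h))
  rw [index_eq_card, ← card_top, ← htop, Nat.card_zpowers, hord]

end Subgroup

namespace Commute

variable {G : Type*} [Group G] {x y : G}

def zpowMulZpowHom (h : Commute x y) : Multiplicative (ℤ × ℤ) →* G where
  toFun p := x ^ p.toAdd.1 * y ^ p.toAdd.2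
  map_one' := by simp
  map_mul' p q := by
    simp only [toAdd_mul, Prod.fst_add, Prod.snd_add, zpow_add]
    exact ((h.symm.zpow_zpow _ _).mul_mul_mul_comm _ _).symm

theorem zpowMulZpowHom_apply (h : Commute x y) (p : Multiplicative (ℤ × ℤ)) :
    h.zpowMulZpowHom p = x ^ p.toAdd.1 * y ^ p.toAdd.2 := rfl

theorem range_zpowMulZpowHom (h : Commute x y) : h.zpowMulZpowHom.range = closure {x, y} := by
  apply le_antisymm
  · rintro _ ⟨p, rfl⟩
    exact mul_mem (zpow_mem (subset_closure (by simp)) _) (zpow_mem (subset_closure (by simp)) _)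
  · rw [closure_le, Set.insert_subset_iff, Set.singleton_subset_iff]
    exact ⟨⟨.ofAdd (1, 0), by simp [zpowMulZpowHom_apply]⟩,
      ⟨.ofAdd (0, 1), by simp [zpowMulZpowHom_apply]⟩⟩

noncomputable def closurePairEquiv (h : Commute x y) (hinj : Function.Injective h.zpowMulZpowHom) :
    closure {x, y} ≃* Multiplicative (ℤ × ℤ) :=
  (MulEquiv.subgroupCongr h.range_zpowMulZpowHom.symm).trans (MonoidHom.ofInjective hinj).symm

end Commute

namespace Stmt9

abbrev P : Type := PresentedGroup stmt9Rels

def a : P := PresentedGroup.of 0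
def e : P := PresentedGroup.of 1
def f : P := PresentedGroup.of 2

theorem e_mul_self : e * e = 1 :=
  PresentedGroup.one_of_mem (x := .of 1 * .of 1) (by simp [stmt9Rels])

theorem a_mul_e_mul_a_inv : a * e * a⁻¹ = f :=
  PresentedGroup.mk_eq_mk_of_mul_inv_mem (x := .of 0 * .of 1 * (.of 0)⁻¹) (by simp [stmt9Rels])

theorem a_mul_f_mul_a_inv : a * f * a⁻¹ = e :=
  PresentedGroup.mk_eq_mk_of_mul_inv_mem (x := .of 0 * .of 2 * (.of 0)⁻¹) (by simp [stmt9Rels])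

theorem e_inv : e⁻¹ = e := inv_eq_of_mul_eq_one_right e_mul_self

theorem commute_a_mul_a_e : Commute (a * a) e := by
  have h : a * a * e * (a * a)⁻¹ = e := calc
    _ = a * (a * e * a⁻¹) * a⁻¹ := by group
    _ = e := by rw [a_mul_e_mul_a_inv, a_mul_f_mul_a_inv]
  exact mul_inv_eq_iff_eq_mul.mp h

def x : P := a * e
def y : P := e * a

theorem x_mul_y : x * y = a * a := by
  rw [x, y, mul_assoc, ← mul_assoc e, e_mul_self, one_mul]

theorem commute_x_y : Commute x y := by
  rw [Commute, SemiconjBy, x_mul_y, x, y, ← mul_assoc, mul_assoc e, ← commute_a_mul_a_e.eq,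
    mul_assoc, e_mul_self, mul_one]

theorem a_mul_x_mul_a_inv : a * x * a⁻¹ = y := by
  rw [x, y, ← mul_assoc, commute_a_mul_a_e.eq]; group

theorem a_mul_y_mul_a_inv : a * y * a⁻¹ = x := by
  rw [x, y]; group

theorem e_mul_x_mul_e_inv : e * x * e⁻¹ = y := by
  rw [x, y, e_inv, mul_assoc, mul_assoc, e_mul_self, mul_one]

theorem e_mul_y_mul_e_inv : e * y * e⁻¹ = x := by
  rw [x, y, e_inv, ← mul_assoc, e_mul_self, one_mul]

theorem mem_normalizer_of_conj_swap {g : P} (hx : g * x * g⁻¹ = y) (hy : g * y * g⁻¹ = x) :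
    g ∈ normalizer ({x, y} : Set P) := by
  rw [mem_normalizer_iff_conj_image_eq, Set.image_pair, MulAut.conj_apply, MulAut.conj_apply,
    hx, hy, Set.pair_comm]

instance normal_closure_x_y : (closure {x, y}).Normal := by
  rw [← normalizer_eq_top_iff, eq_top_iff]
  refine le_trans ?_ (normalizer_le_normalizer_closure _)
  have ha := mem_normalizer_of_conj_swap a_mul_x_mul_a_inv a_mul_y_mul_a_inv
  have he := mem_normalizer_of_conj_swap e_mul_x_mul_e_inv e_mul_y_mul_e_inv
  rw [← PresentedGroup.closure_range_of, closure_le]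
  rintro _ ⟨j, rfl⟩
  fin_cases j
  · exact ha
  · exact he
  · show f ∈ _
    rw [← a_mul_e_mul_a_inv]
    exact mul_mem (mul_mem ha he) (inv_mem ha)

def aPerm : Equiv.Perm (ℤ × ℤ) where
  toFun v := (v.2 + 1, v.1)
  invFun v := (v.2, v.1 - 1)
  left_inv v := by simp
  right_inv v := by simp

def ePerm : Equiv.Perm (ℤ × ℤ) where
  toFun v := (v.2, v.1)
  invFun v := (v.2, v.1)
  left_inv _ := rfl
  right_inv _ := rfl

def fPerm : Equiv.Perm (ℤ × ℤ) where
  toFun v := (v.2 + 1, v.1 - 1)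
  invFun v := (v.2 + 1, v.1 - 1)
  left_inv v := by simp
  right_inv v := by simp

@[simp] theorem aPerm_apply (v : ℤ × ℤ) : aPerm v = (v.2 + 1, v.1) := rfl
@[simp] theorem aPerm_inv_apply (v : ℤ × ℤ) : aPerm⁻¹ v = (v.2, v.1 - 1) := rfl
@[simp] theorem ePerm_apply (v : ℤ × ℤ) : ePerm v = (v.2, v.1) := rfl
@[simp] theorem ePerm_inv_apply (v : ℤ × ℤ) : ePerm⁻¹ v = (v.2, v.1) := rfl
@[simp] theorem fPerm_apply (v : ℤ × ℤ) : fPerm v = (v.2 + 1, v.1 - 1) := rfl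
@[simp] theorem fPerm_inv_apply (v : ℤ × ℤ) : fPerm⁻¹ v = (v.2 + 1, v.1 - 1) := rfl

theorem lift_perms_eq_one_of_mem_rels :
    ∀ r ∈ stmt9Rels, FreeGroup.lift ![aPerm, ePerm, fPerm] r = 1 := by
  simp only [stmt9Rels, Set.mem_insert_iff, Set.mem_singleton_iff]
  rintro r (rfl | rfl | rfl | rfl) <;> ext v <;> simp [Equiv.Perm.mul_apply]

def toPerm : P →* Equiv.Perm (ℤ × ℤ) := PresentedGroup.toGroup lift_perms_eq_one_of_mem_rels

theorem toPerm_a : toPerm a = aPerm := PresentedGroup.toGroup.of _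

theorem toPerm_e : toPerm e = ePerm := PresentedGroup.toGroup.of _

theorem toPerm_x : toPerm x = Equiv.addLeft (1, 0) := by
  ext v <;> simp [x, toPerm_a, toPerm_e, Equiv.Perm.mul_apply, add_comm]

theorem toPerm_y : toPerm y = Equiv.addLeft (0, 1) := by
  ext v <;> simp [y, toPerm_a, toPerm_e, Equiv.Perm.mul_apply, add_comm]

theorem toPerm_zpowMulZpowHom (p : Multiplicative (ℤ × ℤ)) :
    toPerm (commute_x_y.zpowMulZpowHom p) = Equiv.addLeft p.toAdd := by
  rw [Commute.zpowMulZpowHom_apply, map_mul, map_zpow, map_zpow, toPerm_x, toPerm_y,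
    Equiv.zsmul_addLeft, Equiv.zsmul_addLeft, ← Equiv.addLeft_add]
  congr 1
  simp

theorem injective_zpowMulZpowHom : Function.Injective commute_x_y.zpowMulZpowHom := by
  rw [injective_iff_map_eq_one]
  intro p hp
  have h := congrArg (· (0, 0)) (toPerm_zpowMulZpowHom p)
  simpa [hp] using h.symm

theorem a_notMem_closure : a ∉ closure {x, y} := by
  rw [← commute_x_y.range_zpowMulZpowHom]
  rintro ⟨p, hp⟩
  have h := toPerm_zpowMulZpowHom p
  rw [hp, toPerm_a] at h
  have h₀ := congrArg (· (0, 0)) h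
  have h₁ := congrArg (· (0, 1)) h
  simp [Prod.ext_iff] at h₀ h₁
  omega

theorem a_mul_a_mem_closure : a * a ∈ closure {x, y} :=
  x_mul_y ▸ mul_mem (subset_closure (by simp)) (subset_closure (by simp))

theorem of_inv_mul_a_mem_closure (j : Fin 3) :
    (PresentedGroup.of j : P)⁻¹ * a ∈ closure {x, y} := by
  fin_cases j
  · simp [a]
  · show e⁻¹ * a ∈ _
    exact e_inv ▸ subset_closure (by simp [y])
  · show f⁻¹ * a ∈ _
    rw [← a_mul_e_mul_a_inv, show (a * e * a⁻¹)⁻¹ * a = a * e⁻¹ by group, e_inv]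
    exact subset_closure (by simp [x])

end Stmt9

/-- In the group `P = ⟨a, e, f | e² = 1, f² = 1, a e a⁻¹ = f, a f a⁻¹ = e⟩`, the subgroup
generated by the two elements `a e` and `e a` is free abelian of rank 2 (isomorphic to
`ℤ × ℤ`) and has index 2 in `P`. -/
theorem stmt9 :
    Nonempty ((Subgroup.closure
        {PresentedGroup.of (rels := stmt9Rels) 0 * PresentedGroup.of 1,
         PresentedGroup.of (rels := stmt9Rels) 1 * PresentedGroup.of 0}) ≃*
      Multiplicative (ℤ × ℤ)) ∧
    (Subgroup.closure
        {PresentedGroup.of (rels := stmt9Rels) 0 * PresentedGroup.of 1,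
         PresentedGroup.of (rels := stmt9Rels) 1 * PresentedGroup.of 0}).index = 2 := by
  open Stmt9 in
  change Nonempty (closure {x, y} ≃* _) ∧ (closure {x, y}).index = 2
  exact ⟨⟨commute_x_y.closurePairEquiv injective_zpowMulZpowHom⟩,
    index_eq_two_of_closure_eq_top (PresentedGroup.closure_range_of _) a_notMem_closure
      a_mul_a_mem_closure (Set.forall_mem_range.mpr of_inv_mul_a_mem_closure)⟩
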